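/- arXiv:1009.5615 — 4 statements merged into one kernel-verified Lean document; each statement's English description precedes it below -/
import Mathlib

section
/- Let ν be the standard Gaussian probability measure on ℝⁿ, i.e. the measure with density x ↦ π^{−n/2}·exp(−‖x‖²) with respect to Lebesgue measure, and let r > 0 and B_r(0) be the open Euclidean ball of radius r centered at 0. If n is even, then ν(B_r(0)) = e^{−r²} ∑_{k=n/2}^{∞} r^{2k}/k!. If n is odd, then ν(B_r(0)) = e^{−r²} ∑_{k=(n+1)/2}^{∞} r^{2k−1}/Γ(k+1/2). -/
/-! In polar coordinates the Gaussian measure of `B_r` is the regularized lower incomplete gamma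
function `γ(n/2, r²) / Γ(n/2)`. Integration by parts gives
`γ(s, x) / Γ(s) = e^{-x} x^s / Γ(s + 1) + γ(s + 1, x) / Γ(s + 1)`; iterating it expands
`γ(s, x) / Γ(s)` as `e^{-x} ∑ₖ x^{s+k} / Γ(s+k+1)` plus a remainder that is dominated by the next
term of the series, hence tends to zero. For `n = 0` the series is that of `exp`. -/

open MeasureTheory

/-- The standard Gaussian probability measure on `ℝⁿ`, with density
`x ↦ π^(−n/2) · exp(−‖x‖²)` with respect to Lebesgue measure. -/
noncomputable def stdGaussian (n : ℕ) : Measure (EuclideanSpace ℝ (Fin n)) :=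
  volume.withDensity fun x =>
    ENNReal.ofReal ((Real.sqrt Real.pi ^ n)⁻¹ * Real.exp (-‖x‖ ^ 2))

open Real Set Filter Topology Module

noncomputable def lowerIncompleteGamma (s x : ℝ) : ℝ :=
  ∫ u in (0 : ℝ)..x, u ^ (s - 1) * exp (-u)

section lowerIncompleteGamma

variable {s x : ℝ}

open intervalIntegral

lemma intervalIntegrable_rpow_mul_exp_neg (hs : -1 < s) (x : ℝ) :
    IntervalIntegrable (fun u => u ^ s * exp (-u)) volume 0 x :=
  (intervalIntegrable_rpow' hs).mul_continuousOn (by fun_prop)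

lemma lowerIncompleteGamma_nonneg (s : ℝ) (hx : 0 ≤ x) : 0 ≤ lowerIncompleteGamma s x :=
  integral_nonneg hx fun u hu => by have := hu.1; positivity

lemma lowerIncompleteGamma_le (hs : 0 < s) (hx : 0 ≤ x) :
    lowerIncompleteGamma s x ≤ x ^ s / s :=
  calc lowerIncompleteGamma s x ≤ ∫ u in (0 : ℝ)..x, u ^ (s - 1) :=
        integral_mono_on hx (intervalIntegrable_rpow_mul_exp_neg (by linarith) x)
          (intervalIntegrable_rpow' (by linarith)) fun u hu =>
            mul_le_of_le_one_right (rpow_nonneg hu.1 _) (exp_le_one_iff.2 (by linarith [hu.1]))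
    _ = x ^ s / s := by rw [integral_rpow (Or.inl (by linarith))]; simp [zero_rpow hs.ne']

lemma lowerIncompleteGamma_add_one (hs : 0 < s) (hx : 0 ≤ x) :
    lowerIncompleteGamma (s + 1) x = s * lowerIncompleteGamma s x - x ^ s * exp (-x) := by
  have parts := integral_mul_deriv_eq_deriv_mul_of_hasDeriv_right
    (u := fun u => u ^ s) (v := fun u => -exp (-u)) (u' := fun u => s * u ^ (s - 1))
    (v' := fun u => exp (-u)) (a := 0) (b := x)
    (fun u _ => (continuousAt_rpow_const u s (Or.inr hs.le)).continuousWithinAt) (by fun_prop)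
    (fun u hu => by
      rw [min_eq_left hx] at hu
      exact (hasDerivAt_rpow_const (Or.inl hu.1.ne')).hasDerivWithinAt)
    (fun u _ => (show HasDerivAt (fun u => -exp (-u)) (exp (-u)) u by
      simpa using (hasDerivAt_neg u).exp.fun_neg).hasDerivWithinAt)
    ((intervalIntegrable_rpow' (by linarith)).const_mul s)
    (Continuous.intervalIntegrable (by fun_prop) _ _)
  simp only [lowerIncompleteGamma, add_sub_cancel_right, parts, zero_rpow hs.ne', mul_neg,
    intervalIntegral.integral_neg, mul_assoc, intervalIntegral.integral_const_mul]
  ring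

lemma lowerIncompleteGamma_div_Gamma_eq (hs : 0 < s) (hx : 0 ≤ x) :
    lowerIncompleteGamma s x / Gamma s =
      exp (-x) * (x ^ s / Gamma (s + 1)) + lowerIncompleteGamma (s + 1) x / Gamma (s + 1) := by
  have := Gamma_pos_of_pos hs
  rw [lowerIncompleteGamma_add_one hs hx, Gamma_add_one hs.ne']
  field_simp
  ring

lemma lowerIncompleteGamma_div_Gamma_eq_sum_add (hs : 0 < s) (hx : 0 ≤ x) (N : ℕ) :
    lowerIncompleteGamma s x / Gamma s =
      exp (-x) * ∑ k ∈ Finset.range N, x ^ (s + k) / Gamma (s + k + 1) +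
        lowerIncompleteGamma (s + N) x / Gamma (s + N) := by
  induction N with
  | zero => simp
  | succ N ih =>
    rw [ih, lowerIncompleteGamma_div_Gamma_eq (by positivity) hx, Finset.sum_range_succ]
    push_cast
    ring_nf

lemma lowerIncompleteGamma_div_Gamma_le (hs : 0 < s) (hx : 0 ≤ x) :
    lowerIncompleteGamma s x / Gamma s ≤ x ^ s / Gamma (s + 1) := by
  rw [Gamma_add_one hs.ne', ← div_div]
  gcongr
  exact lowerIncompleteGamma_le hs hx

theorem hasSum_rpow_div_Gamma (hs : 0 < s) (hx : 0 ≤ x) :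
    HasSum (fun k : ℕ => x ^ (s + k) / Gamma (s + k + 1))
      (exp x * (lowerIncompleteGamma s x / Gamma s)) := by
  set R : ℕ → ℝ := fun N => lowerIncompleteGamma (s + N) x / Gamma (s + N)
  have partial_sum (N : ℕ) : ∑ k ∈ Finset.range N, x ^ (s + k) / Gamma (s + k + 1) =
      exp x * (lowerIncompleteGamma s x / Gamma s - R N) := by
    rw [lowerIncompleteGamma_div_Gamma_eq_sum_add hs hx N, add_sub_cancel_right, ← mul_assoc,
      ← exp_add, add_neg_cancel, exp_zero, one_mul]
  have term_nonneg (k : ℕ) : 0 ≤ x ^ (s + k) / Gamma (s + k + 1) := by positivity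
  have R_nonneg (N : ℕ) : 0 ≤ R N := by
    have := lowerIncompleteGamma_nonneg (s + N) hx
    positivity
  -- The partial sums are bounded, so the terms tend to zero, and they dominate the remainders.
  have summable : Summable fun k : ℕ => x ^ (s + k) / Gamma (s + k + 1) :=
    summable_of_sum_range_le term_nonneg fun N => by
      rw [partial_sum]
      exact mul_le_mul_of_nonneg_left (sub_le_self _ (R_nonneg N)) (exp_pos x).le
  have R_tendsto : Tendsto R atTop (𝓝 0) :=
    squeeze_zero R_nonneg (fun N => lowerIncompleteGamma_div_Gamma_le (by positivity) hx)
      summable.tendsto_atTop_zero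
  rw [hasSum_iff_tendsto_nat_of_nonneg term_nonneg, funext partial_sum]
  simpa using (R_tendsto.const_sub (lowerIncompleteGamma s x / Gamma s)).const_mul (exp x)

end lowerIncompleteGamma

lemma sq_rpow_natCast_div_two {y : ℝ} (hy : 0 ≤ y) (n : ℕ) :
    (y ^ 2) ^ ((n : ℝ) / 2) = y ^ n := by
  rw [← rpow_natCast y 2, ← rpow_mul hy, Nat.cast_ofNat, mul_div_cancel₀ _ two_ne_zero,
    rpow_natCast]

lemma integral_Ioo_pow_mul_exp_neg_sq {n : ℕ} (hn : 0 < n) {r : ℝ} (hr : 0 ≤ r) :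
    ∫ y in Ioo 0 r, y ^ (n - 1) * exp (-y ^ 2) = lowerIncompleteGamma (n / 2) (r ^ 2) / 2 := by
  have sq_strictMonoOn : StrictMonoOn (fun y : ℝ => y ^ 2) (Ici 0) :=
    pow_left_strictMonoOn₀ two_ne_zero
  have image_sq : (fun y : ℝ => y ^ 2) '' Ioo 0 r = Ioo 0 (r ^ 2) := by
    simpa using (continuous_pow 2).continuousOn.image_Ioo_of_strictMonoOn hr
      (sq_strictMonoOn.mono Icc_subset_Ici_self)
  rw [lowerIncompleteGamma, intervalIntegral.integral_of_le (by positivity),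
    integral_Ioc_eq_integral_Ioo, ← image_sq,
    integral_image_eq_integral_abs_deriv_smul measurableSet_Ioo
      (fun y _ => (hasDerivAt_pow 2 y).hasDerivWithinAt)
      (sq_strictMonoOn.mono (Ioo_subset_Ioi_self.trans Ioi_subset_Ici_self)).injOn,
    ← integral_div]
  refine setIntegral_congr_fun measurableSet_Ioo fun y hy => ?_
  have hy0 : 0 < y := hy.1
  have rpow_eq : (y ^ 2) ^ ((n : ℝ) / 2 - 1) * y = y ^ (n - 1) := by
    rw [rpow_sub_one (by positivity), sq_rpow_natCast_div_two hy0.le, ← pow_sub_one_mul hn.ne']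
    field_simp
  have jacobian : |((2 : ℕ) : ℝ) * y ^ (2 - 1)| = 2 * y := by norm_num [abs_of_pos hy0]
  rw [smul_eq_mul, jacobian, ← rpow_eq]
  ring

section InnerProductSpace

variable {V : Type*} [NormedAddCommGroup V] [InnerProductSpace ℝ V] [FiniteDimensional ℝ V]
  [MeasurableSpace V] [BorelSpace V]

lemma integral_exp_neg_sq_norm : ∫ x : V, exp (-‖x‖ ^ 2) = √π ^ finrank ℝ V := by
  rw [sqrt_eq_rpow, ← rpow_natCast, ← rpow_mul pi_nonneg, one_div_mul_eq_div]
  simpa using GaussianFourier.integral_rexp_neg_mul_sq_norm (V := V) one_pos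

lemma integrable_exp_neg_sq_norm : Integrable fun x : V => exp (-‖x‖ ^ 2) :=
  .of_integral_ne_zero <| integral_exp_neg_sq_norm.trans_ne (by positivity)

lemma integral_ball_exp_neg_sq_norm [Nontrivial V] {r : ℝ} (hr : 0 ≤ r) :
    ∫ x in Metric.ball (0 : V) r, exp (-‖x‖ ^ 2) =
      √π ^ finrank ℝ V *
        (lowerIncompleteGamma (finrank ℝ V / 2) (r ^ 2) / Gamma (finrank ℝ V / 2)) := by
  have radial : ∫ x in Metric.ball (0 : V) r, exp (-‖x‖ ^ 2) =
      ∫ x : V, (Iio r).indicator (fun y => exp (-y ^ 2)) ‖x‖ := by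
    rw [← integral_indicator measurableSet_ball]
    congr with x
    by_cases hx : ‖x‖ < r <;> simp [hx]
  have radial_Ioo : ∫ y in Ioi (0 : ℝ),
        y ^ (finrank ℝ V - 1) • (Iio r).indicator (fun y => exp (-y ^ 2)) y =
      ∫ y in Ioo 0 r, y ^ (finrank ℝ V - 1) * exp (-y ^ 2) := by
    have : (fun y : ℝ => y ^ (finrank ℝ V - 1) • (Iio r).indicator (fun y => exp (-y ^ 2)) y) =
        (Iio r).indicator fun y => y ^ (finrank ℝ V - 1) * exp (-y ^ 2) := by
      ext y
      by_cases hy : y < r <;> simp [hy]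
    rw [this, setIntegral_indicator measurableSet_Iio, Ioi_inter_Iio]
  have hd : 0 < finrank ℝ V := finrank_pos
  have hΓ := Gamma_pos_of_pos (by positivity : (0 : ℝ) < finrank ℝ V / 2)
  rw [radial, integral_fun_norm_addHaar volume, radial_Ioo, integral_Ioo_pow_mul_exp_neg_sq hd hr,
    measureReal_def, InnerProductSpace.volume_ball, ENNReal.ofReal_one, one_pow, one_mul,
    ENNReal.toReal_ofReal (by positivity), Gamma_add_one (by positivity), nsmul_eq_mul,
    smul_eq_mul]
  field_simp

end InnerProductSpace

lemma stdGaussian_apply (n : ℕ) {s : Set (EuclideanSpace ℝ (Fin n))} (hs : MeasurableSet s) :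
    stdGaussian n s = ENNReal.ofReal ((√π ^ n)⁻¹ * ∫ x in s, exp (-‖x‖ ^ 2)) := by
  rw [stdGaussian, withDensity_apply _ hs, ← integral_const_mul,
    ofReal_integral_eq_lintegral_ofReal (integrable_exp_neg_sq_norm.integrableOn.const_mul _)
      (ae_of_all _ fun x => by positivity)]

instance isProbabilityMeasure_stdGaussian (n : ℕ) : IsProbabilityMeasure (stdGaussian n) := by
  constructor
  rw [stdGaussian_apply n MeasurableSet.univ, setIntegral_univ, integral_exp_neg_sq_norm,
    finrank_euclideanSpace_fin, inv_mul_cancel₀ (by positivity), ENNReal.ofReal_one]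

lemma stdGaussian_ball_eq_lowerIncompleteGamma {n : ℕ} (hn : 0 < n) {r : ℝ} (hr : 0 ≤ r) :
    stdGaussian n (Metric.ball 0 r) =
      ENNReal.ofReal (lowerIncompleteGamma (n / 2) (r ^ 2) / Gamma (n / 2)) := by
  have : Nonempty (Fin n) := ⟨⟨0, hn⟩⟩
  rw [stdGaussian_apply n measurableSet_ball, integral_ball_exp_neg_sq_norm hr,
    finrank_euclideanSpace_fin, inv_mul_cancel_left₀ (by positivity)]

lemma stdGaussian_ball_eq_tsum (n : ℕ) {r : ℝ} (hr : 0 < r) :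
    stdGaussian n (Metric.ball 0 r) =
      ENNReal.ofReal (exp (-r ^ 2) * ∑' k : ℕ, r ^ (n + 2 * k) / Gamma (n / 2 + k + 1)) := by
  rcases n.eq_zero_or_pos with rfl | hn
  · have : Metric.ball (0 : EuclideanSpace ℝ (Fin 0)) r = univ :=
      eq_univ_of_forall fun x => by simpa [Subsingleton.elim x 0] using hr
    simp only [this, measure_univ, CharP.cast_eq_zero, zero_div, zero_add, pow_mul,
      Gamma_nat_eq_factorial, (NormedSpace.expSeries_div_hasSum_exp (r ^ 2)).tsum_eq,
      ← exp_eq_exp_ℝ, ← exp_add, neg_add_cancel, exp_zero, ENNReal.ofReal_one]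
  · have term (k : ℕ) : r ^ (n + 2 * k) / Gamma (n / 2 + k + 1) =
        (r ^ 2) ^ ((n / 2 : ℝ) + k) / Gamma (n / 2 + k + 1) := by
      rw [← sq_rpow_natCast_div_two hr.le (n + 2 * k)]
      push_cast
      ring_nf
    rw [stdGaussian_ball_eq_lowerIncompleteGamma hn hr.le, tsum_congr term,
      (hasSum_rpow_div_Gamma (by positivity) (sq_nonneg r)).tsum_eq, ← mul_assoc, ← exp_add,
      neg_add_cancel, exp_zero, one_mul]

/-- The standard Gaussian measure of the open ball of radius `r > 0` in `ℝⁿ`: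
if `n = 2m` it equals `e^{−r²} ∑_{k≥m} r^{2k}/k!`, and if `n = 2m+1` it equals
`e^{−r²} ∑_{k≥m+1} r^{2k−1}/Γ(k+1/2)`. -/
theorem stdGaussian_ball (n : ℕ) (r : ℝ) (hr : 0 < r) :
    (∀ m : ℕ, n = 2 * m →
      stdGaussian n (Metric.ball (0 : EuclideanSpace ℝ (Fin n)) r) =
        ENNReal.ofReal (Real.exp (-r ^ 2) *
          ∑' k : ℕ, r ^ (2 * (m + k)) / (Nat.factorial (m + k) : ℝ))) ∧
    (∀ m : ℕ, n = 2 * m + 1 →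
      stdGaussian n (Metric.ball (0 : EuclideanSpace ℝ (Fin n)) r) =
        ENNReal.ofReal (Real.exp (-r ^ 2) *
          ∑' k : ℕ, r ^ (2 * (m + 1 + k) - 1) / Real.Gamma ((m + 1 + k : ℝ) + 1 / 2))) := by
  refine ⟨fun m hm => ?_, fun m hm => ?_⟩ <;> subst hm <;>
    rw [stdGaussian_ball_eq_tsum _ hr] <;> congr 2 <;> refine tsum_congr fun k => ?_
  · rw [← mul_add, ← Gamma_nat_eq_factorial]
    push_cast
    ring_nf
  · rw [show 2 * m + 1 + 2 * k = 2 * (m + 1 + k) - 1 by omega]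
    push_cast
    ring_nf
end

section
/- For every r > 0, the standard Gaussian measure of the ball of radius r tends to zero as the dimension tends to infinity: if ν⁽ⁿ⁾ denotes the probability measure on ℝⁿ with density x ↦ π^{−n/2}·exp(−‖x‖²) with respect to Lebesgue measure, and B_rⁿ(0) ⊆ ℝⁿ is the open Euclidean ball of radius r centered at 0, then lim_{n→∞} ν⁽ⁿ⁾(B_rⁿ(0)) = 0. (This is the key step in the paper's proof that an infinite-dimensional Hilbert space has measure zero inside the projective-limit Gaussian measure space.) -/
/-!
The density of `stdGaussian n` is at most `π^(−n/2)`, so the Gaussian measure of the ball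
`B_r` is at most `π^(−n/2) · vol(B_r) = r^n / Γ(n/2 + 1)`. Since `Γ(n/2 + 1) ≥ ⌊n/2⌋!`,
this is dominated by `R · (R²)^⌊n/2⌋ / ⌊n/2⌋!` with `R = max |r| 1`, which tends to zero.
-/

open MeasureTheory Filter Topology

namespace Real

theorem factorial_half_le_Gamma_half_add_one {n : ℕ} (hn : 2 ≤ n) :
    ((n / 2).factorial : ℝ) ≤ Gamma ((n : ℝ) / 2 + 1) := by
  have hk : (2 : ℝ) ≤ ((n / 2 : ℕ) : ℝ) + 1 := by
    have : 1 ≤ n / 2 := by omega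
    have : (1 : ℝ) ≤ ((n / 2 : ℕ) : ℝ) := by exact_mod_cast this
    linarith
  have hle : ((n / 2 : ℕ) : ℝ) + 1 ≤ (n : ℝ) / 2 + 1 := by
    have : ((2 * (n / 2) : ℕ) : ℝ) ≤ n := by exact_mod_cast Nat.mul_div_le n 2
    push_cast at this
    linarith
  rw [← Gamma_nat_eq_factorial]
  exact Gamma_strictMonoOn_Ici.monotoneOn hk (hk.trans hle) hle

theorem tendsto_pow_div_Gamma_half_add_one (r : ℝ) :
    Tendsto (fun n : ℕ => r ^ n / Gamma ((n : ℝ) / 2 + 1)) atTop (𝓝 0) := by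
  set R : ℝ := max |r| 1
  have hR : 1 ≤ R := le_max_right _ _
  have hbound : Tendsto (fun n : ℕ => R * ((R ^ 2) ^ (n / 2) / ((n / 2).factorial : ℝ)))
      atTop (𝓝 0) := by
    simpa using ((FloorSemiring.tendsto_pow_div_factorial_atTop (R ^ 2)).comp
      (Nat.tendsto_div_const_atTop two_ne_zero)).const_mul R
  refine squeeze_zero_norm' ?_ hbound
  filter_upwards [eventually_ge_atTop 2] with n hn
  have hfac : (0 : ℝ) < ((n / 2).factorial : ℝ) := by exact_mod_cast (n / 2).factorial_pos
  have hΓ := factorial_half_le_Gamma_half_add_one hn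
  have hpow : |r| ^ n ≤ R * (R ^ 2) ^ (n / 2) :=
    calc |r| ^ n ≤ R ^ n := pow_le_pow_left₀ (abs_nonneg r) (le_max_left _ _) n
      _ ≤ R ^ (2 * (n / 2) + 1) := pow_le_pow_right₀ hR (by omega)
      _ = R * (R ^ 2) ^ (n / 2) := by rw [← pow_mul, pow_succ']
  rw [norm_div, norm_pow, norm_eq_abs, norm_of_nonneg (hfac.trans_le hΓ).le, mul_div_assoc']
  exact div_le_div₀ (by positivity) hpow hfac hΓ

end Real

theorem stdGaussian_le_smul_volume (n : ℕ) :
    stdGaussian n ≤ ENNReal.ofReal (Real.sqrt Real.pi ^ n)⁻¹ • volume := by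
  rw [stdGaussian, ← withDensity_const]
  refine withDensity_mono (Eventually.of_forall fun x => ENNReal.ofReal_le_ofReal ?_)
  exact mul_le_of_le_one_right (by positivity) (Real.exp_le_one_iff.mpr (by simp))

theorem stdGaussian_ball_le {n : ℕ} (hn : n ≠ 0) (x : EuclideanSpace ℝ (Fin n)) {r : ℝ}
    (hr : 0 ≤ r) :
    stdGaussian n (Metric.ball x r) ≤ ENNReal.ofReal (r ^ n / Real.Gamma ((n : ℝ) / 2 + 1)) := by
  have : Nonempty (Fin n) := Fin.pos_iff_nonempty.mp (Nat.pos_of_ne_zero hn)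
  have hΓ : 0 < Real.Gamma ((n : ℝ) / 2 + 1) := Real.Gamma_pos_of_pos (by positivity)
  refine (stdGaussian_le_smul_volume n _).trans_eq ?_
  rw [Measure.smul_apply, smul_eq_mul, EuclideanSpace.volume_ball, Fintype.card_fin,
    ← ENNReal.ofReal_pow hr, ← ENNReal.ofReal_mul (by positivity),
    ← ENNReal.ofReal_mul (by positivity)]
  congr 1
  field_simp

/-- For every fixed `r > 0`, the standard Gaussian measure of the open ball of radius `r`
in `ℝⁿ` tends to zero as the dimension `n` tends to infinity. -/
theorem stdGaussian_ball_tendsto_zero (r : ℝ) (hr : 0 < r) :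
    Filter.Tendsto (fun n : ℕ => stdGaussian n (Metric.ball (0 : EuclideanSpace ℝ (Fin n)) r))
      Filter.atTop (nhds 0) := by
  have hbound := ENNReal.tendsto_ofReal (Real.tendsto_pow_div_Gamma_half_add_one r)
  rw [ENNReal.ofReal_zero] at hbound
  refine tendsto_of_tendsto_of_tendsto_of_le_of_le' tendsto_const_nhds hbound
    (Eventually.of_forall fun _ => zero_le) ?_
  filter_upwards [eventually_ne_atTop 0] with n hn
  exact stdGaussian_ball_le hn 0 hr.le
end

section
/- Inner product of coherent states: let Q be a positive definite hermitian n×n matrix. For all x, y ∈ ℂⁿ, the function z ↦ conj(K_x(z))·K_y(z) = exp((z,x)_Q + (y,z)_Q) is ν_Q-integrable and ∫_{ℂⁿ} conj(K_x(z))·K_y(z)·dν_Q(z) = exp((y,x)_Q). In particular, ∫_{ℂⁿ} |K_x(z)|² dν_Q(z) = exp((x,x)_Q). -/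
open MeasureTheory ComplexOrder

/-- The sesquilinear form `(u,v)_Q := ∑_{i,j} conj(uᵢ) Q_{ij} vⱼ` on `ℂⁿ`. -/
noncomputable def innerQC {n : ℕ} (Q : Matrix (Fin n) (Fin n) ℂ) (u v : Fin n → ℂ) : ℂ :=
  ∑ i, ∑ j, (starRingEnd ℂ) (u i) * Q i j * v j

/-- The Gaussian measure `ν_Q` on `ℂⁿ` associated to a positive definite hermitian
matrix `Q`, with density `z ↦ (det Q / πⁿ)·exp(−(z,z)_Q)` with respect to Lebesgue
measure on `ℂⁿ ≅ ℝ²ⁿ`. -/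
noncomputable def gaussianMeasureC {n : ℕ} (Q : Matrix (Fin n) (Fin n) ℂ) :
    Measure (Fin n → ℂ) :=
  volume.withDensity fun z =>
    ENNReal.ofReal ((Q.det.re / Real.pi ^ n) * Real.exp (-(innerQC Q z z).re))

/-- The coherent state associated to `x ∈ ℂⁿ`: `K_x(z) := exp((x,z)_Q)`. -/
noncomputable def coherent {n : ℕ} (Q : Matrix (Fin n) (Fin n) ℂ) (x z : Fin n → ℂ) : ℂ :=
  Complex.exp (innerQC Q x z)

open Complex Real Matrix
open scoped ComplexConjugate

/-!
Diagonalise `Q = U D Uᴴ` with `U` unitary and `D = diag(d₁, …, dₙ)`, `dᵢ > 0`. The substitution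
`z = U w` preserves Lebesgue measure, since the real determinant of a complex-linear map is
`|det U|² = 1`, and turns `exp(-(z,z)_Q + (z,x)_Q + (y,z)_Q)` into a product of one-variable
Gaussians `exp(-dᵢ|wᵢ|² + aᵢ w̄ᵢ + cᵢ wᵢ)`. Splitting `wᵢ` into real and imaginary parts, each
integrates to `(π/dᵢ) exp(aᵢcᵢ/dᵢ)`, so the whole integral is `πⁿ/det Q · exp((y,x)_Q)`, and the
normalising constant `det Q/πⁿ` of `ν_Q` cancels the prefactor.
-/

-- The `+ 0` terms match the shape `b * x ^ 2 + c * x + d` of `integral_cexp_quadratic`.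
theorem cexp_neg_mul_normSq_add_measurableEquivRealProd_symm (b a c : ℂ) (p : ℝ × ℝ) :
    cexp (-b * normSq (measurableEquivRealProd.symm p) + a * conj (measurableEquivRealProd.symm p)
      + c * measurableEquivRealProd.symm p) =
    cexp (-b * (p.1 : ℂ) ^ 2 + (a + c) * p.1 + 0) *
      cexp (-b * (p.2 : ℂ) ^ 2 + (c - a) * I * p.2 + 0) := by
  rw [← Complex.exp_add, measurableEquivRealProd_symm_apply, normSq_mk,
    show (⟨p.1, p.2⟩ : ℂ) = p.1 + p.2 * I from Complex.ext (by simp) (by simp)]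
  congr 1
  simp only [map_add, map_mul, conj_ofReal, conj_I]
  push_cast
  ring_nf

theorem integrable_cexp_neg_mul_normSq_add {b : ℂ} (hb : 0 < b.re) (a c : ℂ) :
    Integrable fun z : ℂ => cexp (-b * normSq z + a * conj z + c * z) := by
  rw [← volume_preserving_equiv_real_prod.symm.integrable_comp_emb
    measurableEquivRealProd.symm.measurableEmbedding]
  simp only [Function.comp_def, cexp_neg_mul_normSq_add_measurableEquivRealProd_symm,
    Measure.volume_eq_prod]
  exact (integrable_cexp_quadratic hb _ _).mul_prod (integrable_cexp_quadratic hb _ _)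

theorem integral_cexp_neg_mul_normSq_add {b : ℂ} (hb : 0 < b.re) (a c : ℂ) :
    ∫ z : ℂ, cexp (-b * normSq z + a * conj z + c * z) = π / b * cexp (a * c / b) := by
  have hb' : (-b).re < 0 := by simpa using hb
  have hb0 : b ≠ 0 := fun h => by simp [h] at hb
  rw [← volume_preserving_equiv_real_prod.symm.integral_comp
    measurableEquivRealProd.symm.measurableEmbedding]
  simp only [cexp_neg_mul_normSq_add_measurableEquivRealProd_symm, Measure.volume_eq_prod]
  rw [integral_prod_mul (f := fun s : ℝ => cexp (-b * (s : ℂ) ^ 2 + (a + c) * s + 0))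
    (g := fun t : ℝ => cexp (-b * (t : ℂ) ^ 2 + (c - a) * I * t + 0)),
    integral_cexp_quadratic hb', integral_cexp_quadratic hb', neg_neg,
    mul_mul_mul_comm, ← cpow_add _ _ (div_ne_zero (ofReal_ne_zero.2 Real.pi_ne_zero) hb0),
    ← Complex.exp_add, add_halves, cpow_one, mul_pow, I_sq]
  congr 2
  field_simp
  ring

theorem LinearMap.measurePreserving_of_norm_det_eq_one {E : Type*} [NormedAddCommGroup E]
    [NormedSpace ℂ E] [FiniteDimensional ℂ E] [MeasurableSpace E] [BorelSpace E]
    (μ : Measure E) [μ.IsAddHaarMeasure] (f : E →ₗ[ℂ] E) (hf : ‖LinearMap.det f‖ = 1) :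
    MeasurePreserving f μ μ where
  measurable := f.continuous_of_finiteDimensional.measurable
  map_eq := by
    have hdet : LinearMap.det (f.restrictScalars ℝ) = 1 := by
      rw [LinearMap.det_restrictScalars, Algebra.norm_complex_apply, normSq_eq_norm_sq, hf,
        one_pow]
    change μ.map (f.restrictScalars ℝ) = μ
    rw [Measure.map_linearMap_addHaar_eq_smul_addHaar μ (by simp [hdet]), hdet]
    simp

section UnitaryGroup

variable {ι : Type*} [Fintype ι] [DecidableEq ι] (U : unitaryGroup ι ℂ)

theorem Matrix.UnitaryGroup.measurePreserving_mulVec :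
    MeasurePreserving (fun w : ι → ℂ => (U : Matrix ι ι ℂ) *ᵥ w) := by
  refine LinearMap.measurePreserving_of_norm_det_eq_one (E := ι → ℂ) volume
    (Matrix.toLin' (U : Matrix ι ι ℂ)) ?_
  rw [LinearMap.det_toLin']
  exact CStarRing.norm_of_mem_unitary (det_of_mem_unitary U.2)

theorem Matrix.UnitaryGroup.measurableEmbedding_mulVec :
    MeasurableEmbedding (fun w : ι → ℂ => (U : Matrix ι ι ℂ) *ᵥ w) :=
  (UnitaryGroup.toLinearEquiv U).toContinuousLinearEquiv.toHomeomorph.measurableEmbedding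

end UnitaryGroup

section innerQC

variable {n : ℕ}

theorem innerQC_eq_dotProduct (Q : Matrix (Fin n) (Fin n) ℂ) (u v : Fin n → ℂ) :
    innerQC Q u v = star u ⬝ᵥ Q *ᵥ v := by
  simp [innerQC, dotProduct, mulVec, Finset.mul_sum, mul_assoc]

theorem innerQC_mulVec_mulVec (Q U : Matrix (Fin n) (Fin n) ℂ) (u v : Fin n → ℂ) :
    innerQC Q (U *ᵥ u) (U *ᵥ v) = innerQC (Uᴴ * Q * U) u v := by
  simp only [innerQC_eq_dotProduct, star_mulVec, dotProduct_mulVec, vecMul_vecMul, mulVec_mulVec,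
    Matrix.mul_assoc]

theorem innerQC_diagonal (d : Fin n → ℂ) (u v : Fin n → ℂ) :
    innerQC (diagonal d) u v = ∑ i, conj (u i) * d i * v i := by
  simp [innerQC, diagonal_apply]

theorem Matrix.IsHermitian.conj_innerQC {Q : Matrix (Fin n) (Fin n) ℂ} (hQ : Q.IsHermitian)
    (u v : Fin n → ℂ) : conj (innerQC Q u v) = innerQC Q v u := by
  rw [innerQC_eq_dotProduct, innerQC_eq_dotProduct, ← star_def, star_dotProduct, star_star,
    star_mulVec, hQ.eq, dotProduct_mulVec]

theorem Matrix.IsHermitian.ofReal_re_innerQC_self {Q : Matrix (Fin n) (Fin n) ℂ}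
    (hQ : Q.IsHermitian) (z : Fin n → ℂ) : ((innerQC Q z z).re : ℂ) = innerQC Q z z :=
  conj_eq_iff_re.mp (hQ.conj_innerQC z z)

theorem continuous_innerQC_self (Q : Matrix (Fin n) (Fin n) ℂ) :
    Continuous fun z => innerQC Q z z := by
  unfold innerQC
  fun_prop

end innerQC

section gaussianIntegrand

variable {n : ℕ}

noncomputable def gaussianIntegrand (Q : Matrix (Fin n) (Fin n) ℂ) (x y z : Fin n → ℂ) : ℂ :=
  cexp (-innerQC Q z z + innerQC Q z x + innerQC Q y z)

theorem gaussianIntegrand_mulVec {Q U : Matrix (Fin n) (Fin n) ℂ} (hU : U * Uᴴ = 1)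
    (x y w : Fin n → ℂ) :
    gaussianIntegrand Q x y (U *ᵥ w) = gaussianIntegrand (Uᴴ * Q * U) (Uᴴ *ᵥ x) (Uᴴ *ᵥ y) w := by
  have h (v : Fin n → ℂ) : v = U *ᵥ Uᴴ *ᵥ v := by rw [mulVec_mulVec, hU, one_mulVec]
  unfold gaussianIntegrand
  conv_lhs => rw [h x, h y]
  simp only [innerQC_mulVec_mulVec]

theorem gaussianIntegrand_diagonal (d : Fin n → ℂ) (x y w : Fin n → ℂ) :
    gaussianIntegrand (diagonal d) x y w =
      ∏ i, cexp (-d i * normSq (w i) + d i * x i * conj (w i) + conj (y i) * d i * w i) := by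
  rw [gaussianIntegrand, ← Complex.exp_sum]
  simp only [innerQC_diagonal, ← Finset.sum_neg_distrib, ← Finset.sum_add_distrib,
    normSq_eq_conj_mul_self]
  congr 1
  refine Finset.sum_congr rfl fun i _ => ?_
  ring

theorem integrable_gaussianIntegrand_diagonal {d : Fin n → ℂ} (hd : ∀ i, 0 < (d i).re)
    (x y : Fin n → ℂ) :
    Integrable (gaussianIntegrand (diagonal d) x y) := by
  simp only [funext (gaussianIntegrand_diagonal d x y)]
  exact Integrable.fintype_prod (f := fun i w =>
    cexp (-d i * normSq w + d i * x i * conj w + conj (y i) * d i * w))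
    fun i => integrable_cexp_neg_mul_normSq_add (hd i) _ _

theorem integral_gaussianIntegrand_diagonal {d : Fin n → ℂ} (hd : ∀ i, 0 < (d i).re)
    (x y : Fin n → ℂ) :
    ∫ w, gaussianIntegrand (diagonal d) x y w =
      π ^ n / det (diagonal d) * cexp (innerQC (diagonal d) y x) := by
  simp only [gaussianIntegrand_diagonal]
  rw [integral_fintype_prod_volume_eq_prod (f := fun i w =>
    cexp (-d i * normSq w + d i * x i * conj w + conj (y i) * d i * w))]
  simp only [integral_cexp_neg_mul_normSq_add (hd _), Finset.prod_mul_distrib, ← Complex.exp_sum,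
    Finset.prod_div_distrib, Finset.prod_const, Finset.card_univ, Fintype.card_fin, det_diagonal,
    innerQC_diagonal]
  congr 2
  refine Finset.sum_congr rfl fun i _ => ?_
  have : d i ≠ 0 := fun h => by simpa [h] using hd i
  field_simp

end gaussianIntegrand

section Hermitian

variable {n : ℕ} {Q : Matrix (Fin n) (Fin n) ℂ}

theorem Matrix.IsHermitian.conjTranspose_eigenvectorUnitary_mul_mul (hQ : Q.IsHermitian) :
    (hQ.eigenvectorUnitary : Matrix (Fin n) (Fin n) ℂ)ᴴ * Q * hQ.eigenvectorUnitary =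
      diagonal (fun i => (hQ.eigenvalues i : ℂ)) := by
  have h := hQ.conjStarAlgAut_star_eigenvectorUnitary
  rw [Unitary.conjStarAlgAut_star_apply] at h
  exact h

theorem Matrix.IsHermitian.gaussianIntegrand_comp_eigenvectorUnitary (hQ : Q.IsHermitian)
    (x y : Fin n → ℂ) :
    (fun w => gaussianIntegrand Q x y ((hQ.eigenvectorUnitary : Matrix (Fin n) (Fin n) ℂ) *ᵥ w)) =
      gaussianIntegrand (diagonal (fun i => (hQ.eigenvalues i : ℂ)))
        ((hQ.eigenvectorUnitary : Matrix (Fin n) (Fin n) ℂ)ᴴ *ᵥ x)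
        ((hQ.eigenvectorUnitary : Matrix (Fin n) (Fin n) ℂ)ᴴ *ᵥ y) := by
  funext w
  rw [gaussianIntegrand_mulVec (Unitary.coe_mul_star_self _),
    hQ.conjTranspose_eigenvectorUnitary_mul_mul]

theorem Matrix.PosDef.integrable_gaussianIntegrand (hQ : Q.PosDef) (x y : Fin n → ℂ) :
    Integrable (gaussianIntegrand Q x y) := by
  rw [← (UnitaryGroup.measurePreserving_mulVec _).integrable_comp_emb
    (UnitaryGroup.measurableEmbedding_mulVec hQ.1.eigenvectorUnitary), Function.comp_def,
    hQ.1.gaussianIntegrand_comp_eigenvectorUnitary]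
  exact integrable_gaussianIntegrand_diagonal (fun i => by simpa using hQ.eigenvalues_pos i) _ _

theorem Matrix.PosDef.integral_gaussianIntegrand (hQ : Q.PosDef) (x y : Fin n → ℂ) :
    ∫ z, gaussianIntegrand Q x y z = π ^ n / det Q * cexp (innerQC Q y x) := by
  have hdet : det Q = ∏ i, (hQ.1.eigenvalues i : ℂ) := hQ.1.det_eq_prod_eigenvalues
  have hU : (hQ.1.eigenvectorUnitary : Matrix (Fin n) (Fin n) ℂ) * (hQ.1.eigenvectorUnitary)ᴴ =
      1 :=
    Unitary.coe_mul_star_self _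
  rw [← (UnitaryGroup.measurePreserving_mulVec _).integral_comp
    (UnitaryGroup.measurableEmbedding_mulVec hQ.1.eigenvectorUnitary),
    hQ.1.gaussianIntegrand_comp_eigenvectorUnitary,
    integral_gaussianIntegrand_diagonal (fun i => by simpa using hQ.eigenvalues_pos i),
    det_diagonal, ← hdet, ← hQ.1.conjTranspose_eigenvectorUnitary_mul_mul,
    ← innerQC_mulVec_mulVec, mulVec_mulVec, mulVec_mulVec, hU, one_mulVec, one_mulVec]

end Hermitian

section gaussianMeasureC

variable {n : ℕ}

theorem measurable_gaussianDensity (Q : Matrix (Fin n) (Fin n) ℂ) :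
    Measurable fun z =>
      ENNReal.ofReal ((Q.det.re / π ^ n) * Real.exp (-(innerQC Q z z).re)) :=
  ((continuous_re.comp (continuous_innerQC_self Q)).neg.rexp.const_mul _).measurable
    |>.ennreal_ofReal

variable {Q : Matrix (Fin n) (Fin n) ℂ} {E : Type*} [NormedAddCommGroup E] [NormedSpace ℝ E]

theorem integral_gaussianMeasureC (hdet : 0 ≤ (det Q).re) (g : (Fin n → ℂ) → E) :
    ∫ z, g z ∂gaussianMeasureC Q =
      ((det Q).re / π ^ n) • ∫ z, Real.exp (-(innerQC Q z z).re) • g z := by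
  rw [gaussianMeasureC, integral_withDensity_eq_integral_toReal_smul
    (measurable_gaussianDensity Q) (ae_of_all _ fun _ => ENNReal.ofReal_lt_top), ← integral_smul]
  refine integral_congr_ae (ae_of_all _ fun z => ?_)
  dsimp only
  rw [ENNReal.toReal_ofReal (by positivity), mul_smul]

theorem integrable_gaussianMeasureC {g : (Fin n → ℂ) → E} (hdet : 0 ≤ (det Q).re)
    (hg : Integrable fun z => Real.exp (-(innerQC Q z z).re) • g z) :
    Integrable g (gaussianMeasureC Q) := by
  rw [gaussianMeasureC, integrable_withDensity_iff_integrable_smul'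
    (measurable_gaussianDensity Q) (ae_of_all _ fun _ => ENNReal.ofReal_lt_top)]
  refine (hg.smul ((det Q).re / π ^ n)).congr (ae_of_all _ fun z => ?_)
  dsimp only [Pi.smul_apply]
  rw [ENNReal.toReal_ofReal (by positivity), mul_smul]

end gaussianMeasureC

section coherent

variable {n : ℕ} {Q : Matrix (Fin n) (Fin n) ℂ}

theorem Matrix.IsHermitian.exp_neg_innerQC_self_smul_conj_coherent_mul (hQ : Q.IsHermitian)
    (x y z : Fin n → ℂ) :
    Real.exp (-(innerQC Q z z).re) • (conj (coherent Q x z) * coherent Q y z) =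
      gaussianIntegrand Q x y z := by
  rw [coherent, coherent, ← Complex.exp_conj, hQ.conj_innerQC, Complex.real_smul, ofReal_exp,
    ofReal_neg, hQ.ofReal_re_innerQC_self, ← Complex.exp_add, ← Complex.exp_add, gaussianIntegrand,
    add_assoc]

theorem Matrix.PosDef.integrable_conj_coherent_mul (hQ : Q.PosDef) (x y : Fin n → ℂ) :
    Integrable (fun z => conj (coherent Q x z) * coherent Q y z) (gaussianMeasureC Q) := by
  refine integrable_gaussianMeasureC (Complex.pos_iff.1 hQ.det_pos).1.le ?_
  simp only [hQ.1.exp_neg_innerQC_self_smul_conj_coherent_mul]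
  exact hQ.integrable_gaussianIntegrand x y

theorem Matrix.PosDef.integral_conj_coherent_mul (hQ : Q.PosDef) (x y : Fin n → ℂ) :
    ∫ z, conj (coherent Q x z) * coherent Q y z ∂gaussianMeasureC Q = cexp (innerQC Q y x) := by
  obtain ⟨hre, him⟩ := Complex.pos_iff.1 hQ.det_pos
  have hdet : ((det Q).re : ℂ) = det Q := Complex.ext rfl (by simp [him])
  rw [integral_gaussianMeasureC hre.le]
  simp only [hQ.1.exp_neg_innerQC_self_smul_conj_coherent_mul]
  rw [hQ.integral_gaussianIntegrand, Complex.real_smul, ofReal_div, hdet, ofReal_pow,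
    ← mul_assoc, div_mul_div_cancel₀, div_self hQ.det_pos.ne', one_mul]
  exact pow_ne_zero _ (ofReal_ne_zero.2 Real.pi_ne_zero)

theorem Matrix.PosDef.integral_norm_coherent_sq (hQ : Q.PosDef) (x : Fin n → ℂ) :
    ∫ z, ‖coherent Q x z‖ ^ 2 ∂gaussianMeasureC Q = Real.exp (innerQC Q x x).re := by
  have h (z : Fin n → ℂ) :
      ‖coherent Q x z‖ ^ 2 = RCLike.re (conj (coherent Q x z) * coherent Q x z) := by
    rw [RCLike.re_to_complex, ← normSq_eq_conj_mul_self, ofReal_re, normSq_eq_norm_sq]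
  simp only [h]
  rw [integral_re (hQ.integrable_conj_coherent_mul x x), hQ.integral_conj_coherent_mul,
    RCLike.re_to_complex, ← exp_ofReal_re, hQ.1.ofReal_re_innerQC_self]

end coherent

/-- Inner product of coherent states: `z ↦ conj(K_x(z))·K_y(z)` is `ν_Q`-integrable,
`∫ conj(K_x)·K_y dν_Q = exp((y,x)_Q)`, and in particular
`∫ |K_x|² dν_Q = exp((x,x)_Q)`. -/
theorem coherent_inner {n : ℕ} (Q : Matrix (Fin n) (Fin n) ℂ) (hQ : Q.PosDef)
    (x y : Fin n → ℂ) :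
    Integrable (fun z => (starRingEnd ℂ) (coherent Q x z) * coherent Q y z)
        (gaussianMeasureC Q) ∧
    (∫ z, (starRingEnd ℂ) (coherent Q x z) * coherent Q y z ∂(gaussianMeasureC Q)
        = Complex.exp (innerQC Q y x)) ∧
    (∫ z, ‖coherent Q x z‖ ^ 2 ∂(gaussianMeasureC Q) = Real.exp ((innerQC Q x x).re)) :=
  ⟨hQ.integrable_conj_coherent_mul x y, hQ.integral_conj_coherent_mul x y,
    hQ.integral_norm_coherent_sq x⟩
end

section
/- Amplitude of a coherent state (finite-dimensional case): let H be a finite-dimensional complex inner product space with inner product ⟨·,·⟩ conjugate-linear in the first argument, set g := Re⟨·,·⟩, and let V ⊆ H be an ℝ-linear subspace such that Im⟨v,w⟩ = 0 for all v,w ∈ V and such that H = V ⊕ i·V (every element of H is uniquely a + i·b with a,b ∈ V). Let ν be the probability measure on V obtained by normalizing the measure exp(−(1/4)·g(φ,φ))·dμ(φ), where μ is any Haar (Lebesgue) measure on the real vector space V. Then for every ξ ∈ H, writing ξ = ξᴿ + i·ξᴵ with ξᴿ, ξᴵ ∈ V, the function φ ↦ exp((1/2)·⟨ξ,φ⟩)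 on V is ν-integrable and ∫_V exp((1/2)·⟨ξ,φ⟩) dν(φ) = exp((1/4)·g(ξᴿ,ξᴿ) − (1/4)·g(ξᴵ,ξᴵ) − (i/2)·g(ξᴿ,ξᴵ)). -/
/-!
On `V` the complex inner product is real, so `φ ↦ ⟨ξ, φ⟩ = g(ξᴿ, φ) - i g(ξᴵ, φ)` is a complex
combination of two real linear forms on the Euclidean space `(V, g)`, and `ν` is the normalised
Gaussian `exp(-‖φ‖²/4) dφ`; the normalisation makes the choice of Haar measure irrelevant. In an
orthonormal basis the integral factors into one-dimensional integrals
`∫ exp(-b x² + c x) dx = √(π/b) exp(c²/(4b))`, valid for complex `c`, and the constant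
`(π/b)^(dim V/2)` cancels against the normalisation.
-/

open MeasureTheory Complex Real Module
open scoped ENNReal NNReal RealInnerProductSpace

theorem real_exp_smul_cexp (a : ℝ) (z : ℂ) : rexp a • cexp z = cexp (a + z) := by
  rw [real_smul, ofReal_exp, Complex.exp_add]

theorem MeasureTheory.Measure.inv_smul_measure_univ_smul {α : Type*} [MeasurableSpace α]
    (μ : Measure α) {c : ℝ≥0∞} (hc₀ : c ≠ 0) (hc : c ≠ ∞) :
    ((c • μ) Set.univ)⁻¹ • (c • μ) = (μ Set.univ)⁻¹ • μ := by
  rw [Measure.smul_apply, smul_eq_mul, ENNReal.mul_inv (.inl hc₀) (.inl hc), smul_smul,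
    mul_right_comm, ENNReal.inv_mul_cancel hc₀ hc, one_mul]

theorem integral_cexp_neg_mul_sq_norm_add_two_inner_of_euclideanSpace {ι : Type*} [Fintype ι]
    {b : ℂ} (hb : 0 < b.re) (c₁ c₂ : ℂ) (w₁ w₂ : EuclideanSpace ℝ ι) :
    ∫ v : EuclideanSpace ℝ ι, cexp (-b * ‖v‖ ^ 2 + (c₁ * ⟪w₁, v⟫ + c₂ * ⟪w₂, v⟫)) =
      (π / b) ^ (Fintype.card ι / 2 : ℂ) *
        cexp ((c₁ ^ 2 * ‖w₁‖ ^ 2 + 2 * c₁ * c₂ * ⟪w₁, w₂⟫ + c₂ ^ 2 * ‖w₂‖ ^ 2) / (4 * b)) := by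
  have norm_sq (w : EuclideanSpace ℝ ι) : ((‖w‖ : ℝ) : ℂ) ^ 2 = ∑ i, (w i : ℂ) ^ 2 := by
    exact_mod_cast EuclideanSpace.real_norm_sq_eq w
  have inner_eq (w v : EuclideanSpace ℝ ι) : ((⟪w, v⟫ : ℝ) : ℂ) = ∑ i, (w i : ℂ) * v i := by
    simp [PiLp.inner_apply, mul_comm]
  rw [← (PiLp.volume_preserving_toLp ι).integral_comp
    (MeasurableEquiv.toLp 2 _).measurableEmbedding]
  convert GaussianFourier.integral_cexp_neg_mul_sum_add hb (fun i ↦ c₁ * w₁ i + c₂ * w₂ i)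
    using 3 with v
  · rfl
  · simp only [norm_sq, inner_eq, Finset.mul_sum, ← Finset.sum_add_distrib]
    exact congrArg cexp (Finset.sum_congr rfl fun i _ ↦ by ring)
  · simp only [norm_sq, inner_eq, Finset.mul_sum, ← Finset.sum_add_distrib]
    exact congrArg (· / (4 * b)) (Finset.sum_congr rfl fun i _ ↦ by ring)

section InnerProductSpace

variable {E : Type*} [NormedAddCommGroup E] [InnerProductSpace ℝ E] [FiniteDimensional ℝ E]
  [MeasurableSpace E] [BorelSpace E]

theorem integral_cexp_neg_mul_sq_norm_add_two_inner {b : ℂ} (hb : 0 < b.re) (c₁ c₂ : ℂ)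
    (w₁ w₂ : E) :
    ∫ v : E, cexp (-b * ‖v‖ ^ 2 + (c₁ * ⟪w₁, v⟫ + c₂ * ⟪w₂, v⟫)) =
      (π / b) ^ (finrank ℝ E / 2 : ℂ) *
        cexp ((c₁ ^ 2 * ‖w₁‖ ^ 2 + 2 * c₁ * c₂ * ⟪w₁, w₂⟫ + c₂ ^ 2 * ‖w₂‖ ^ 2) / (4 * b)) := by
  let e := (stdOrthonormalBasis ℝ E).repr.symm
  rw [← e.measurePreserving.integral_comp e.toHomeomorph.measurableEmbedding]
  convert! integral_cexp_neg_mul_sq_norm_add_two_inner_of_euclideanSpace hb c₁ c₂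
    (e.symm w₁) (e.symm w₂) using 1 <;>
    simp [LinearIsometryEquiv.inner_map_eq_flip]

theorem integrable_cexp_neg_mul_sq_norm_add_two_inner {b : ℂ} (hb : 0 < b.re) (c₁ c₂ : ℂ)
    (w₁ w₂ : E) :
    Integrable fun v : E ↦ cexp (-b * ‖v‖ ^ 2 + (c₁ * ⟪w₁, v⟫ + c₂ * ⟪w₂, v⟫)) := by
  -- the Bochner integral of a non-integrable function is `0`
  refine .of_integral_ne_zero ?_
  rw [integral_cexp_neg_mul_sq_norm_add_two_inner hb]
  have hb₀ : b ≠ 0 := fun h ↦ by simp [h] at hb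
  exact mul_ne_zero (cpow_ne_zero_iff.mpr (.inl (div_ne_zero (ofReal_ne_zero.mpr pi_ne_zero) hb₀)))
    (Complex.exp_ne_zero _)

theorem MeasureTheory.Measure.inv_withDensity_univ_smul_withDensity_eq_volume (μ : Measure E)
    [μ.IsAddHaarMeasure] (f : E → ℝ≥0∞) :
    (μ.withDensity f Set.univ)⁻¹ • μ.withDensity f =
      (volume.withDensity f Set.univ)⁻¹ • volume.withDensity f := by
  have hc₀ : (μ.addHaarScalarFactor volume : ℝ≥0∞) ≠ 0 := by
    exact_mod_cast (μ.addHaarScalarFactor_pos_of_isAddHaarMeasure volume).ne'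
  rw [μ.isAddLeftInvariant_eq_smul volume, ENNReal.smul_def, withDensity_smul_measure,
    Measure.inv_smul_measure_univ_smul _ hc₀ ENNReal.coe_ne_top]

variable (E) in
noncomputable def gaussianVolume (b : ℝ) : Measure E :=
  volume.withDensity fun v ↦ ENNReal.ofReal (rexp (-b * ‖v‖ ^ 2))

theorem gaussianVolume_univ {b : ℝ} (hb : 0 < b) :
    gaussianVolume E b Set.univ = ENNReal.ofReal ((π / b) ^ (finrank ℝ E / 2 : ℝ)) := by
  have hint : Integrable fun v : E ↦ rexp (-b * ‖v‖ ^ 2) := by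
    refine .of_integral_ne_zero ?_
    rw [GaussianFourier.integral_rexp_neg_mul_sq_norm hb]
    positivity
  rw [gaussianVolume, withDensity_apply _ MeasurableSet.univ, setLIntegral_univ,
    ← GaussianFourier.integral_rexp_neg_mul_sq_norm hb,
    ofReal_integral_eq_lintegral_ofReal hint (.of_forall fun _ ↦ (exp_pos _).le)]

theorem integrable_gaussianVolume_iff {F : Type*} [NormedAddCommGroup F] [NormedSpace ℝ F]
    (b : ℝ) {f : E → F} :
    Integrable f (gaussianVolume E b) ↔ Integrable fun v ↦ rexp (-b * ‖v‖ ^ 2) • f v := by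
  rw [gaussianVolume, integrable_withDensity_iff_integrable_smul' (by fun_prop)
    (.of_forall fun _ ↦ ENNReal.ofReal_lt_top)]
  simp only [ENNReal.toReal_ofReal (exp_pos _).le]

theorem integral_gaussianVolume {F : Type*} [NormedAddCommGroup F] [NormedSpace ℝ F]
    (b : ℝ) (f : E → F) :
    ∫ v, f v ∂gaussianVolume E b = ∫ v, rexp (-b * ‖v‖ ^ 2) • f v := by
  rw [gaussianVolume, integral_withDensity_eq_integral_toReal_smul (by fun_prop)
    (.of_forall fun _ ↦ ENNReal.ofReal_lt_top)]
  simp only [ENNReal.toReal_ofReal (exp_pos _).le]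

theorem integral_cexp_two_inner_gaussianVolume {b : ℝ} (hb : 0 < b) (c₁ c₂ : ℂ) (w₁ w₂ : E) :
    ∫ v, cexp (c₁ * ⟪w₁, v⟫ + c₂ * ⟪w₂, v⟫) ∂gaussianVolume E b =
      ((π / b) ^ (finrank ℝ E / 2 : ℝ) : ℝ) *
        cexp ((c₁ ^ 2 * ‖w₁‖ ^ 2 + 2 * c₁ * c₂ * ⟪w₁, w₂⟫ + c₂ ^ 2 * ‖w₂‖ ^ 2) / (4 * b)) := by
  simp only [integral_gaussianVolume, real_exp_smul_cexp, ofReal_mul, ofReal_neg, ofReal_pow]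
  rw [integral_cexp_neg_mul_sq_norm_add_two_inner (b := b) (by simpa using hb),
    ofReal_cpow (by positivity)]
  push_cast
  rfl

theorem integrable_cexp_two_inner_normalized_gaussianVolume {b : ℝ} (hb : 0 < b) (c₁ c₂ : ℂ)
    (w₁ w₂ : E) :
    Integrable (fun v ↦ cexp (c₁ * ⟪w₁, v⟫ + c₂ * ⟪w₂, v⟫))
      ((gaussianVolume E b Set.univ)⁻¹ • gaussianVolume E b) := by
  refine Integrable.smul_measure ?_ (ENNReal.inv_ne_top.mpr ?_)
  · simpa only [integrable_gaussianVolume_iff, real_exp_smul_cexp, ofReal_mul, ofReal_neg,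
      ofReal_pow] using
      integrable_cexp_neg_mul_sq_norm_add_two_inner (b := b) (by simpa using hb) c₁ c₂ w₁ w₂
  · rw [gaussianVolume_univ hb]
    exact (ENNReal.ofReal_pos.mpr (by positivity)).ne'

theorem integral_cexp_two_inner_normalized_gaussianVolume {b : ℝ} (hb : 0 < b) (c₁ c₂ : ℂ)
    (w₁ w₂ : E) :
    ∫ v, cexp (c₁ * ⟪w₁, v⟫ + c₂ * ⟪w₂, v⟫)
        ∂((gaussianVolume E b Set.univ)⁻¹ • gaussianVolume E b) =
      cexp ((c₁ ^ 2 * ‖w₁‖ ^ 2 + 2 * c₁ * c₂ * ⟪w₁, w₂⟫ + c₂ ^ 2 * ‖w₂‖ ^ 2) / (4 * b)) := by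
  have hZ : 0 < (π / b) ^ (finrank ℝ E / 2 : ℝ) := by positivity
  rw [integral_smul_measure, integral_cexp_two_inner_gaussianVolume hb, gaussianVolume_univ hb,
    ENNReal.toReal_inv, ENNReal.toReal_ofReal hZ.le, real_smul, ← mul_assoc, ofReal_inv,
    inv_mul_cancel₀ (ofReal_ne_zero.mpr hZ.ne'), one_mul]

end InnerProductSpace

theorem coherent_state_amplitude_general {H : Type*} [NormedAddCommGroup H]
    [InnerProductSpace ℂ H] [FiniteDimensional ℂ H]
    (V : Submodule ℝ H) [MeasurableSpace V] [BorelSpace V]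
    (hiso : ∀ v ∈ V, ∀ w ∈ V, (inner ℂ v w : ℂ).im = 0)
    (μ : Measure V) [μ.IsAddHaarMeasure]
    (ν : Measure V)
    (hν : ν = (μ.withDensity
        (fun φ => ENNReal.ofReal (Real.exp (-(1 / 4) * (inner ℂ (φ : H) (φ : H) : ℂ).re)))
        Set.univ)⁻¹ •
      μ.withDensity
        (fun φ => ENNReal.ofReal (Real.exp (-(1 / 4) * (inner ℂ (φ : H) (φ : H) : ℂ).re))))
    (ξ : H) (ξR ξI : V) (hξ : ξ = (ξR : H) + Complex.I • (ξI : H)) :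
    Integrable (fun φ : V => Complex.exp ((1 / 2) * (inner ℂ ξ (φ : H) : ℂ))) ν ∧
    ∫ φ : V, Complex.exp ((1 / 2) * (inner ℂ ξ (φ : H) : ℂ)) ∂ν
      = Complex.exp ((1 / 4) * ((inner ℂ (ξR : H) (ξR : H) : ℂ).re : ℂ)
          - (1 / 4) * ((inner ℂ (ξI : H) (ξI : H) : ℂ).re : ℂ)
          - (Complex.I / 2) * ((inner ℂ (ξR : H) (ξI : H) : ℂ).re : ℂ)) := by
  -- `rclikeToReal` defines the real inner product as `re ⟪·, ·⟫_ℂ`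
  let _ : InnerProductSpace ℝ H := .rclikeToReal ℂ H
  have inner_eq (v w : V) : inner ℂ (v : H) (w : H) = ((⟪v, w⟫ : ℝ) : ℂ) :=
    Complex.ext rfl (hiso v v.2 w w.2)
  have hν' : ν = (gaussianVolume V (1 / 4) Set.univ)⁻¹ • gaussianVolume V (1 / 4) := by
    rw [hν, Measure.inv_withDensity_univ_smul_withDensity_eq_volume]
    simp only [inner_eq, ofReal_re, real_inner_self_eq_norm_sq]
    rfl
  have amplitude (φ : V) : (1 / 2) * inner ℂ ξ (φ : H) =
      (1 / 2 : ℂ) * ⟪ξR, φ⟫ + (-(I / 2)) * ⟪ξI, φ⟫ := by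
    rw [hξ, inner_add_left, inner_smul_left, inner_eq, inner_eq, conj_I]
    ring
  simp_rw [hν', amplitude]
  refine ⟨integrable_cexp_two_inner_normalized_gaussianVolume (by norm_num) _ _ _ _, ?_⟩
  rw [integral_cexp_two_inner_normalized_gaussianVolume (by norm_num)]
  simp only [inner_eq, ofReal_re, real_inner_self_eq_norm_sq]
  congr 1
  push_cast
  linear_combination (‖ξI‖ ^ 2 / 4 : ℂ) * I_sq

/-- Amplitude of a coherent state (finite-dimensional case): let `H` be a
finite-dimensional complex inner product space, `g := Re⟨·,·⟩`, and `V ⊆ H` a real-linear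
subspace with `Im⟨v,w⟩ = 0` on `V` and `H = V ⊕ i·V` (every `φ ∈ H` is uniquely
`a + i·b` with `a, b ∈ V`). Let `ν` be the probability measure on `V` obtained by
normalizing `exp(−(1/4)·g(φ,φ))·dμ(φ)` for a Haar measure `μ` on `V`. Then for
`ξ = ξᴿ + i·ξᴵ` with `ξᴿ, ξᴵ ∈ V`, the function `φ ↦ exp((1/2)⟨ξ,φ⟩)` is `ν`-integrable
with `∫ exp((1/2)⟨ξ,φ⟩) dν(φ)
  = exp((1/4)g(ξᴿ,ξᴿ) − (1/4)g(ξᴵ,ξᴵ) − (i/2)g(ξᴿ,ξᴵ))`. -/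
theorem coherent_state_amplitude {H : Type*} [NormedAddCommGroup H]
    [InnerProductSpace ℂ H] [FiniteDimensional ℂ H]
    (V : Submodule ℝ H) [MeasurableSpace V] [BorelSpace V]
    (hiso : ∀ v ∈ V, ∀ w ∈ V, (inner ℂ v w : ℂ).im = 0)
    (hdec : ∀ φ : H, ∃! p : V × V, φ = (p.1 : H) + Complex.I • (p.2 : H))
    (μ : Measure V) [μ.IsAddHaarMeasure]
    (ν : Measure V)
    (hν : ν = (μ.withDensity
        (fun φ => ENNReal.ofReal (Real.exp (-(1 / 4) * (inner ℂ (φ : H) (φ : H) : ℂ).re)))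
        Set.univ)⁻¹ •
      μ.withDensity
        (fun φ => ENNReal.ofReal (Real.exp (-(1 / 4) * (inner ℂ (φ : H) (φ : H) : ℂ).re))))
    (ξ : H) (ξR ξI : V) (hξ : ξ = (ξR : H) + Complex.I • (ξI : H)) :
    Integrable (fun φ : V => Complex.exp ((1 / 2) * (inner ℂ ξ (φ : H) : ℂ))) ν ∧
    ∫ φ : V, Complex.exp ((1 / 2) * (inner ℂ ξ (φ : H) : ℂ)) ∂ν
      = Complex.exp ((1 / 4) * ((inner ℂ (ξR : H) (ξR : H) : ℂ).re : ℂ)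
          - (1 / 4) * ((inner ℂ (ξI : H) (ξI : H) : ℂ).re : ℂ)
          - (Complex.I / 2) * ((inner ℂ (ξR : H) (ξI : H) : ℂ).re : ℂ)) :=
  coherent_state_amplitude_general V hiso μ ν hν ξ ξR ξI hξ
end
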